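/- Let n ∈ ℕ, ω ∈ (0, (n+1)π), and let r ∈ 𝒰_n have a phase function g. If the phase error g(x) − ωx equioscillates between 2n+2 points in [−1,1], then r minimizes the approximation error: ‖r − exp(ω·)‖ = min_{u ∈ 𝒰_n} ‖u − exp(ω·)‖ < 2. -/

import Mathlib

open Polynomial

noncomputable section

/-- `p†(z) := conj(p)(−z)`: conjugate the coefficients of `p` and substitute `−z`. -/
def pdag (p : Polynomial ℂ) : Polynomial ℂ :=
  (p.map (starRingEnd ℂ)).comp (-Polynomial.X)

/-- `𝒰 n`: the unitary rational functions of degree `(n,n)`, i.e. rational functions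
of the form `p†/p` with `p` a nonzero complex polynomial of degree at most `n`. -/
def unitaryClass (n : ℕ) : Set (RatFunc ℂ) :=
  {r | ∃ p : Polynomial ℂ, p ≠ 0 ∧ p.natDegree ≤ n ∧ r = RatFunc.mk (pdag p) p}

/-- Evaluation of a rational function at the imaginary point `i·x`. -/
def ieval (r : RatFunc ℂ) (x : ℝ) : ℂ :=
  RatFunc.eval (RingHom.id ℂ) (Complex.I * (x : ℂ)) r

/-- The uniform approximation error `‖r − exp(ω·)‖ = sup_{x∈[−1,1]} |r(ix) − e^{iωx}|`. -/
def errNorm (ω : ℝ) (r : RatFunc ℂ) : ℝ :=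
  sSup ((fun x : ℝ => ‖ieval r x - Complex.exp (Complex.I * ω * x)‖) ''
    Set.Icc (-1 : ℝ) 1)

/-- The maximal phase error `max_{x∈[−1,1]} |g(x) − ωx|`. -/
def phaseErrSup (ω : ℝ) (g : ℝ → ℝ) : ℝ :=
  sSup ((fun x : ℝ => |g x - ω * x|) '' Set.Icc (-1 : ℝ) 1)

/-- `g` is a phase function for `r ∈ 𝒰 n`: for some `m ≤ n`, `θ ∈ ℝ` and poles
`s j = ξ j + i μ j` with `ξ j ≠ 0`, `r` has the product representation
`r(z) = (−1)^m e^{iθ} ∏ (z + conj s_j)/(z − s_j)` and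
`g(x) = θ + 2 Σ_j arctan((x − μ j)/ξ j)` with `r(ix) = e^{i g(x)}`. -/
def IsPhaseFun (n : ℕ) (r : RatFunc ℂ) (g : ℝ → ℝ) : Prop :=
  ∃ (m : ℕ) (θ : ℝ) (μ ξ : Fin m → ℝ), m ≤ n ∧ (∀ j, ξ j ≠ 0) ∧
    r = RatFunc.mk
      (Polynomial.C ((-1 : ℂ) ^ m * Complex.exp (θ * Complex.I)) *
        ∏ j, (Polynomial.X + Polynomial.C (starRingEnd ℂ ((ξ j : ℂ) + (μ j : ℂ) * Complex.I))))
      (∏ j, (Polynomial.X - Polynomial.C ((ξ j : ℂ) + (μ j : ℂ) * Complex.I))) ∧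
    (∀ x : ℝ, g x = θ + 2 * ∑ j, Real.arctan ((x - μ j) / ξ j)) ∧
    (∀ x : ℝ, ieval r x = Complex.exp (Complex.I * g x))

/-- The phase error of `g` equioscillates between `m` points in `[−1,1]`. -/
def EquiOsc (ω : ℝ) (g : ℝ → ℝ) (m : ℕ) : Prop :=
  ∃ (η : Fin m → ℝ) (ε : ℝ), StrictMono η ∧ (∀ j, η j ∈ Set.Icc (-1 : ℝ) 1) ∧
    (ε = 1 ∨ ε = -1) ∧
    ∀ j : Fin m, g (η j) - ω * η j = ε * (-1 : ℝ) ^ (j : ℕ) * phaseErrSup ω g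

end

/-!
Let `E` be the maximal phase error. Between consecutive alternation points the phase error
changes by `2E`, while over `[-1, 1]` the phase `g` (a sum of `m ≤ n` monotone arctangents)
varies by at most `2nπ` and `ωx` by `2ω < 2(n + 1)π`; summing over the `2n + 1` gaps gives
`E < π`, hence `‖r − exp(ω·)‖ ≤ 2 sin (E/2) < 2`.
If `u ∈ 𝒰_n` did strictly better, then `u(ix) = e^{i(ωx + φ x)}` with `φ` continuous and
`|φ| < E` on `[-1, 1]`, so `g x − ωx − φ x` changes sign between consecutive alternation points.
Thus `r` and `u` agree at `2n + 1` points of the imaginary axis, and the cross-multiplied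
numerator of `r − u`, of degree at most `2n`, vanishes identically.
-/

open Set Real

lemma pdag_mul (p q : ℂ[X]) : pdag (p * q) = pdag p * pdag q := by
  simp [pdag, Polynomial.map_mul, mul_comp]

lemma pdag_pdag (p : ℂ[X]) : pdag (pdag p) = p := by
  simp [pdag, map_comp, Polynomial.map_map, comp_assoc]

lemma pdag_ne_zero {p : ℂ[X]} (hp : p ≠ 0) : pdag p ≠ 0 := fun h ↦
  hp (by simpa [pdag_pdag, pdag] using congrArg pdag h)

lemma natDegree_pdag (p : ℂ[X]) : (pdag p).natDegree = p.natDegree := by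
  simp [pdag, natDegree_comp]

lemma eval_I_mul_pdag (p : ℂ[X]) (x : ℝ) :
    (pdag p).eval (Complex.I * x) = starRingEnd ℂ (p.eval (Complex.I * x)) := by
  simp [pdag, eval_comp, eval_map, ← Polynomial.eval₂_at_apply]

lemma ieval_eq_div (r : RatFunc ℂ) (x : ℝ) :
    ieval r x = r.num.eval (Complex.I * x) / r.denom.eval (Complex.I * x) :=
  rfl

section unitaryClass

variable {n : ℕ} {r : RatFunc ℂ}

lemma natDegree_num_le_of_mem_unitaryClass (hr : r ∈ unitaryClass n) : r.num.natDegree ≤ n := by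
  obtain ⟨p, hp, hpn, rfl⟩ := hr
  rw [RatFunc.mk_eq_div]
  exact (natDegree_le_of_dvd (RatFunc.num_div_dvd _ hp) (pdag_ne_zero hp)).trans
    (natDegree_pdag p ▸ hpn)

lemma natDegree_denom_le_of_mem_unitaryClass (hr : r ∈ unitaryClass n) :
    r.denom.natDegree ≤ n := by
  obtain ⟨p, hp, hpn, rfl⟩ := hr
  rw [RatFunc.mk_eq_div]
  exact (natDegree_le_of_dvd (RatFunc.denom_div_dvd _ _) hp).trans hpn

lemma num_mul_pdag_num_of_mem_unitaryClass (hr : r ∈ unitaryClass n) :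
    r.num * pdag r.num = r.denom * pdag r.denom := by
  obtain ⟨p, hp, -, hrp⟩ := hr
  have h : r.num * p = pdag p * r.denom :=
    (RatFunc.num_mul_eq_mul_denom_iff hp).mpr (by rw [hrp, RatFunc.mk_eq_div])
  have h' := congrArg pdag h
  rw [pdag_mul, pdag_mul, pdag_pdag] at h'
  refine mul_right_cancel₀ (mul_ne_zero hp (pdag_ne_zero hp)) ?_
  linear_combination (pdag r.num * pdag p) * h + (pdag p * r.denom) * h'

lemma norm_eval_num_eq_norm_eval_denom (hr : r ∈ unitaryClass n) (x : ℝ) :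
    ‖r.num.eval (Complex.I * x)‖ = ‖r.denom.eval (Complex.I * x)‖ := by
  have h := congrArg (eval (Complex.I * x)) (num_mul_pdag_num_of_mem_unitaryClass hr)
  simp only [eval_mul, eval_I_mul_pdag, Complex.mul_conj, Complex.ofReal_inj,
    Complex.normSq_eq_norm_sq] at h
  exact (sq_eq_sq₀ (norm_nonneg _) (norm_nonneg _)).mp h

lemma eval_denom_ne_zero_of_mem_unitaryClass (hr : r ∈ unitaryClass n) (x : ℝ) :
    r.denom.eval (Complex.I * x) ≠ 0 := by
  intro h0
  have hnum : r.num.eval (Complex.I * x) = 0 := by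
    simpa [h0] using norm_eval_num_eq_norm_eval_denom hr x
  obtain ⟨a, b, hab⟩ := RatFunc.isCoprime_num_denom r
  simpa [hnum, h0] using congrArg (eval (Complex.I * x)) hab

lemma norm_ieval_of_mem_unitaryClass (hr : r ∈ unitaryClass n) (x : ℝ) : ‖ieval r x‖ = 1 := by
  rw [ieval_eq_div, norm_div, norm_eval_num_eq_norm_eval_denom hr,
    div_self (norm_ne_zero_iff.mpr (eval_denom_ne_zero_of_mem_unitaryClass hr x))]

lemma continuous_ieval_of_mem_unitaryClass (hr : r ∈ unitaryClass n) : Continuous (ieval r) := by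
  have hI : Continuous fun x : ℝ ↦ Complex.I * x := by fun_prop
  exact ((Polynomial.continuous _).comp hI).div ((Polynomial.continuous _).comp hI)
    (eval_denom_ne_zero_of_mem_unitaryClass hr)

lemma eq_of_ieval_eq_of_mem_unitaryClass {u : RatFunc ℂ} (hr : r ∈ unitaryClass n)
    (hu : u ∈ unitaryClass n) {x : Fin (2 * n + 1) → ℝ} (hx : Function.Injective x)
    (h : ∀ i, ieval r (x i) = ieval u (x i)) : r = u := by
  have hpoly : r.num * u.denom = u.num * r.denom := by
    refine eq_of_natDegree_lt_card_of_eval_eq _ _ (f := fun i ↦ Complex.I * x i)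
      (fun i j hij ↦ hx (by simpa using hij)) (fun i ↦ ?_) ?_
    · have hi := h i
      rw [ieval_eq_div, ieval_eq_div, div_eq_div_iff (eval_denom_ne_zero_of_mem_unitaryClass hr _)
        (eval_denom_ne_zero_of_mem_unitaryClass hu _)] at hi
      simpa only [eval_mul] using hi
    · have := natDegree_mul_le_of_le (natDegree_num_le_of_mem_unitaryClass hr)
        (natDegree_denom_le_of_mem_unitaryClass hu)
      have := natDegree_mul_le_of_le (natDegree_num_le_of_mem_unitaryClass hu)
        (natDegree_denom_le_of_mem_unitaryClass hr)
      rw [Fintype.card_fin]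
      omega
  rw [(RatFunc.num_mul_eq_mul_denom_iff (RatFunc.denom_ne_zero u)).mp hpoly, RatFunc.num_div_denom]

end unitaryClass

lemma norm_exp_I_mul_sub_exp_I_mul (a b : ℝ) :
    ‖Complex.exp (Complex.I * a) - Complex.exp (Complex.I * b)‖ = 2 * |sin ((a - b) / 2)| := by
  have h : Complex.exp (Complex.I * a) - Complex.exp (Complex.I * b) =
      Complex.exp (Complex.I * b) * (Complex.exp (Complex.I * ↑(a - b)) - 1) := by
    rw [mul_sub, ← Complex.exp_add]; push_cast; ring_nf
  rw [h, norm_mul, Complex.norm_exp_I_mul_ofReal, one_mul, Complex.norm_exp_I_mul_ofReal_sub_one,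
    norm_mul, Real.norm_two, Real.norm_eq_abs]

lemma abs_sin_half_le_abs_sin_half {s t : ℝ} (hst : |s| ≤ |t|) (ht : |t| ≤ π) :
    |sin (s / 2)| ≤ |sin (t / 2)| := by
  have habs (y : ℝ) : |y / 2| = |y| / 2 := by rw [abs_div, abs_two]
  have hs : |s / 2| ≤ π := by rw [habs]; linarith [abs_nonneg t, pi_pos]
  have ht' : |t / 2| ≤ π := by rw [habs]; linarith [pi_pos]
  rw [abs_sin_eq_sin_abs_of_abs_le_pi hs, abs_sin_eq_sin_abs_of_abs_le_pi ht', habs, habs]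
  exact sin_le_sin_of_le_of_le_pi_div_two (by linarith [abs_nonneg s, pi_pos]) (by linarith)
    (by linarith)

lemma two_mul_sin_half_lt_two {E : ℝ} (hE : E < π) (hE₀ : 0 ≤ E) : 2 * sin (E / 2) < 2 := by
  have := sin_lt_sin_of_lt_of_le_pi_div_two (by linarith) le_rfl (by linarith : E / 2 < π / 2)
  rw [sin_pi_div_two] at this
  linarith

lemma Fin.sum_succ_sub_castSucc {M : Type*} [AddCommGroup M] {k : ℕ} (f : Fin (k + 1) → M) :
    ∑ i : Fin k, (f i.succ - f i.castSucc) = f (Fin.last k) - f 0 := by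
  induction k with
  | zero => simp
  | succ k ih =>
    rw [Fin.sum_univ_castSucc]
    have := ih fun i ↦ f i.castSucc
    simp only [Fin.succ_castSucc, Fin.castSucc_zero] at this ⊢
    rw [this, Fin.succ_last]
    abel

lemma sum_abs_succ_sub_castSucc_of_monotone_or_antitone {k : ℕ} {s : Fin (k + 1) → ℝ}
    (hs : Monotone s ∨ Antitone s) :
    ∑ i : Fin k, |s i.succ - s i.castSucc| = |s (Fin.last k) - s 0| := by
  have key (s : Fin (k + 1) → ℝ) (hs : Monotone s) :
      ∑ i : Fin k, |s i.succ - s i.castSucc| = |s (Fin.last k) - s 0| := by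
    rw [abs_of_nonneg (sub_nonneg.mpr (hs (Fin.zero_le _))), ← Fin.sum_succ_sub_castSucc]
    exact Finset.sum_congr rfl fun i _ ↦
      abs_of_nonneg (sub_nonneg.mpr (hs (Fin.castSucc_le_succ i)))
  rcases hs with hs | hs
  · exact key s hs
  · simpa only [Pi.neg_apply, neg_sub_neg, abs_sub_comm] using key (-s) hs.neg

lemma abs_arctan_sub_arctan_lt_pi (a b : ℝ) : |arctan a - arctan b| < π :=
  abs_sub_lt_iff.mpr
    ⟨by linarith [arctan_lt_pi_div_two a, neg_pi_div_two_lt_arctan b],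
      by linarith [arctan_lt_pi_div_two b, neg_pi_div_two_lt_arctan a]⟩

lemma monotone_or_antitone_arctan_sub_div (μ ξ : ℝ) :
    Monotone (fun x ↦ arctan ((x - μ) / ξ)) ∨ Antitone (fun x ↦ arctan ((x - μ) / ξ)) := by
  rcases le_total 0 ξ with hξ | hξ
  · exact .inl fun a b hab ↦ arctan_strictMono.monotone
      (div_le_div_of_nonneg_right (by linarith) hξ)
  · exact .inr fun a b hab ↦ arctan_strictMono.monotone
      (div_le_div_of_nonpos_of_le hξ (by linarith))

noncomputable def arctanPhase {m : ℕ} (θ : ℝ) (μ ξ : Fin m → ℝ) (x : ℝ) : ℝ :=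
  θ + 2 * ∑ j, arctan ((x - μ j) / ξ j)

lemma continuous_arctanPhase {m : ℕ} (θ : ℝ) (μ ξ : Fin m → ℝ) :
    Continuous (arctanPhase θ μ ξ) := by
  unfold arctanPhase
  fun_prop

lemma sum_abs_arctanPhase_sub_le {m k : ℕ} (θ : ℝ) (μ ξ : Fin m → ℝ) {η : Fin (k + 1) → ℝ}
    (hη : Monotone η) :
    ∑ i : Fin k, |arctanPhase θ μ ξ (η i.succ) - arctanPhase θ μ ξ (η i.castSucc)| ≤
      2 * m * π := by
  calc ∑ i : Fin k, |arctanPhase θ μ ξ (η i.succ) - arctanPhase θ μ ξ (η i.castSucc)|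
      ≤ ∑ i : Fin k, 2 * ∑ j,
          |arctan ((η i.succ - μ j) / ξ j) - arctan ((η i.castSucc - μ j) / ξ j)| := by
        gcongr with i
        rw [arctanPhase, arctanPhase, add_sub_add_left_eq_sub, ← mul_sub,
          ← Finset.sum_sub_distrib, abs_mul, abs_two]
        gcongr
        exact Finset.abs_sum_le_sum_abs _ _
    _ = 2 * ∑ j, ∑ i : Fin k,
          |arctan ((η i.succ - μ j) / ξ j) - arctan ((η i.castSucc - μ j) / ξ j)| := by
        rw [← Finset.mul_sum, Finset.sum_comm]
    _ ≤ 2 * ∑ _j : Fin m, π := by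
        gcongr with j
        rw [sum_abs_succ_sub_castSucc_of_monotone_or_antitone
          (s := fun i ↦ arctan ((η i - μ j) / ξ j))
          ((monotone_or_antitone_arctan_sub_div (μ j) (ξ j)).imp (·.comp hη) (·.comp_monotone hη))]
        exact (abs_arctan_sub_arctan_lt_pi _ _).le
    _ = 2 * m * π := by simp [mul_assoc]

def Alternates {k : ℕ} (ψ : ℝ → ℝ) (E : ℝ) (η : Fin (k + 1) → ℝ) : Prop :=
  (∀ i, |ψ (η i)| = E) ∧ ∀ i : Fin k, ψ (η i.succ) = -ψ (η i.castSucc)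

lemma EquiOsc.exists_alternates {ω : ℝ} {g : ℝ → ℝ} {k : ℕ} (h : EquiOsc ω g (k + 1)) :
    ∃ η : Fin (k + 1) → ℝ, StrictMono η ∧ (∀ i, η i ∈ Icc (-1) 1) ∧
      Alternates (fun x ↦ g x - ω * x) (phaseErrSup ω g) η := by
  obtain ⟨η, ε, hη, hηI, hε, heq⟩ := h
  have hE : 0 ≤ phaseErrSup ω g := Real.sSup_nonneg (by rintro _ ⟨x, -, rfl⟩; exact abs_nonneg _)
  refine ⟨η, hη, hηI, fun i ↦ ?_, fun i ↦ ?_⟩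
  · show |g (η i) - ω * η i| = _
    rw [heq]
    rcases hε with rfl | rfl <;> simp [abs_mul, abs_of_nonneg hE]
  · simp only [heq, Fin.val_succ, Fin.val_castSucc, pow_succ]
    ring

section Alternates

variable {k : ℕ} {η : Fin (k + 1) → ℝ} {E : ℝ}

lemma Alternates.mul_two_mul_le {g : ℝ → ℝ} {ω : ℝ} (h : Alternates (fun x ↦ g x - ω * x) E η)
    (hη : Monotone η) (hηI : ∀ i, η i ∈ Icc (-1) 1) (hω : 0 ≤ ω) :
    k * (2 * E) ≤ ∑ i : Fin k, |g (η i.succ) - g (η i.castSucc)| + 2 * ω := by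
  have step (i : Fin k) :
      2 * E ≤ |g (η i.succ) - g (η i.castSucc)| + ω * (η i.succ - η i.castSucc) := by
    have hΔ : 0 ≤ η i.succ - η i.castSucc := sub_nonneg.mpr (hη (Fin.castSucc_le_succ i))
    have hsucc := h.2 i
    have habs := h.1 i.castSucc
    dsimp only at hsucc habs
    calc 2 * E = |(g (η i.succ) - ω * η i.succ) - (g (η i.castSucc) - ω * η i.castSucc)| := by
          rw [hsucc, neg_sub_left, abs_neg, ← two_mul, abs_mul, abs_two, habs]
      _ = |(g (η i.succ) - g (η i.castSucc)) - ω * (η i.succ - η i.castSucc)| := by ring_nf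
      _ ≤ |g (η i.succ) - g (η i.castSucc)| + |ω * (η i.succ - η i.castSucc)| := abs_sub _ _
      _ = |g (η i.succ) - g (η i.castSucc)| + ω * (η i.succ - η i.castSucc) := by
          rw [abs_of_nonneg (mul_nonneg hω hΔ)]
  have hspan : η (Fin.last k) - η 0 ≤ 2 := by linarith [(hηI (Fin.last k)).2, (hηI 0).1]
  calc k * (2 * E) = ∑ _i : Fin k, 2 * E := by simp
    _ ≤ ∑ i : Fin k, (|g (η i.succ) - g (η i.castSucc)| + ω * (η i.succ - η i.castSucc)) :=
        Finset.sum_le_sum fun i _ ↦ step i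
    _ = ∑ i : Fin k, |g (η i.succ) - g (η i.castSucc)| + ω * (η (Fin.last k) - η 0) := by
        rw [Finset.sum_add_distrib, ← Finset.mul_sum, Fin.sum_succ_sub_castSucc]
    _ ≤ ∑ i : Fin k, |g (η i.succ) - g (η i.castSucc)| + 2 * ω := by nlinarith

lemma Alternates.lt_pi {n m : ℕ} {ω θ : ℝ} {μ ξ : Fin m → ℝ} {η : Fin (2 * n + 1 + 1) → ℝ}
    (h : Alternates (fun x ↦ arctanPhase θ μ ξ x - ω * x) E η) (hη : Monotone η)
    (hηI : ∀ i, η i ∈ Icc (-1) 1) (hm : m ≤ n) (hω : 0 ≤ ω) (hω' : ω < (n + 1) * π) :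
    E < π := by
  have hsum := h.mul_two_mul_le hη hηI hω
  have hvar := sum_abs_arctanPhase_sub_le θ μ ξ hη
  have hmn : (m : ℝ) ≤ n := by exact_mod_cast hm
  push_cast at hsum
  nlinarith [pi_pos]

lemma Alternates.exists_strictMono_eq {ψ φ : ℝ → ℝ} (h : Alternates ψ E η) (hη : StrictMono η)
    (hηI : ∀ i, η i ∈ Icc (-1) 1) (hψ : ContinuousOn ψ (Icc (-1) 1))
    (hφ : ContinuousOn φ (Icc (-1) 1)) (hφE : ∀ x ∈ Icc (-1) 1, |φ x| < E) :
    ∃ x : Fin k → ℝ, StrictMono x ∧ ∀ i, ψ (x i) = φ (x i) := by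
  have hzero (i : Fin k) : ∃ y ∈ Ioo (η i.castSucc) (η i.succ), ψ y - φ y = 0 := by
    have hab : η i.castSucc < η i.succ := hη Fin.castSucc_lt_succ
    have hD : ContinuousOn (fun x ↦ ψ x - φ x) (Icc (η i.castSucc) (η i.succ)) :=
      (hψ.sub hφ).mono (Icc_subset_Icc (hηI _).1 (hηI _).2)
    have ha := abs_lt.mp (hφE _ (hηI i.castSucc))
    have hb := abs_lt.mp (hφE _ (hηI i.succ))
    have hψa := h.1 i.castSucc
    have hψb := h.2 i
    rcases abs_choice (ψ (η i.castSucc)) with hpos | hneg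
    · exact intermediate_value_Ioo' hab.le hD ⟨by linarith, by linarith⟩
    · exact intermediate_value_Ioo hab.le hD ⟨by linarith, by linarith⟩
  choose x hx hxeq using hzero
  refine ⟨x, fun i j hij ↦ ?_, fun i ↦ sub_eq_zero.mp (hxeq i)⟩
  calc x i < η i.succ := (hx i).2
    _ ≤ η j.castSucc := hη.monotone (Fin.succ_le_castSucc_iff.mpr hij)
    _ < x j := (hx j).1

end Alternates

lemma norm_ieval_sub_exp_of_phase {r : RatFunc ℂ} {g : ℝ → ℝ}
    (hgr : ∀ x : ℝ, ieval r x = Complex.exp (Complex.I * g x)) (ω x : ℝ) :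
    ‖ieval r x - Complex.exp (Complex.I * ω * x)‖ = 2 * |sin ((g x - ω * x) / 2)| := by
  rw [hgr, show Complex.I * ω * x = Complex.I * ↑(ω * x) by push_cast; ring,
    norm_exp_I_mul_sub_exp_I_mul]

lemma abs_sub_le_phaseErrSup {g : ℝ → ℝ} (hg : Continuous g) (ω : ℝ) {x : ℝ}
    (hx : x ∈ Icc (-1) 1) : |g x - ω * x| ≤ phaseErrSup ω g :=
  le_csSup ((isCompact_Icc.image (by fun_prop)).bddAbove) ⟨x, hx, rfl⟩

lemma norm_ieval_sub_exp_le_errNorm {n : ℕ} {u : RatFunc ℂ} (hu : u ∈ unitaryClass n) (ω : ℝ)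
    {x : ℝ} (hx : x ∈ Icc (-1) 1) :
    ‖ieval u x - Complex.exp (Complex.I * ω * x)‖ ≤ errNorm ω u := by
  have hu := continuous_ieval_of_mem_unitaryClass hu
  exact le_csSup ((isCompact_Icc.image (by fun_prop)).bddAbove) ⟨x, hx, rfl⟩

lemma errNorm_le_of_phase {r : RatFunc ℂ} {g : ℝ → ℝ} {ω E : ℝ}
    (hgr : ∀ x : ℝ, ieval r x = Complex.exp (Complex.I * g x))
    (hgE : ∀ x ∈ Icc (-1 : ℝ) 1, |g x - ω * x| ≤ E) (hE : E ≤ π) :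
    errNorm ω r ≤ 2 * sin (E / 2) := by
  have hE₀ : 0 ≤ E := (abs_nonneg _).trans (hgE 0 (by norm_num))
  have hsin : |sin (E / 2)| = sin (E / 2) :=
    abs_of_nonneg (sin_nonneg_of_nonneg_of_le_pi (by linarith) (by linarith [pi_pos]))
  refine csSup_le ((nonempty_Icc.mpr (by norm_num)).image _) ?_
  rintro _ ⟨x, hx, rfl⟩
  dsimp only
  rw [norm_ieval_sub_exp_of_phase hgr, ← hsin]
  refine mul_le_mul_of_nonneg_left (abs_sin_half_le_abs_sin_half ?_ ?_) zero_le_two <;>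
    rw [abs_of_nonneg hE₀]
  exacts [hgE x hx, hE]

/-- The witness is `φ x = arg (u(ix) e^{-iωx})`, off the branch cut since `|φ| < E ≤ π`. -/
lemma exists_phase_of_errNorm_lt {n : ℕ} {u : RatFunc ℂ} {ω E : ℝ} (hu : u ∈ unitaryClass n)
    (hE₀ : 0 ≤ E) (hE : E ≤ π) (hlt : errNorm ω u < 2 * sin (E / 2)) :
    ∃ φ : ℝ → ℝ, ContinuousOn φ (Icc (-1) 1) ∧ (∀ x ∈ Icc (-1 : ℝ) 1, |φ x| < E) ∧
      ∀ x : ℝ, ieval u x = Complex.exp (Complex.I * ↑(ω * x + φ x)) := by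
  set f : ℝ → ℂ := fun x ↦ ieval u x * Complex.exp (-(Complex.I * ↑(ω * x)))
  have hf_norm (x : ℝ) : ‖f x‖ = 1 := by
    rw [norm_mul, norm_ieval_of_mem_unitaryClass hu, ← mul_neg, ← Complex.ofReal_neg,
      Complex.norm_exp_I_mul_ofReal, one_mul]
  have hu_eq (x : ℝ) : ieval u x = Complex.exp (Complex.I * ↑(ω * x + (f x).arg)) := by
    have hf := Complex.norm_mul_exp_arg_mul_I (f x)
    rw [hf_norm, Complex.ofReal_one, one_mul] at hf
    rw [Complex.ofReal_add, mul_add, Complex.exp_add, mul_comm Complex.I ((f x).arg : ℂ), hf,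
      mul_comm (Complex.exp _) (f x), mul_assoc, ← Complex.exp_add, neg_add_cancel,
      Complex.exp_zero, mul_one]
  have hφE (x : ℝ) (hx : x ∈ Icc (-1 : ℝ) 1) : |(f x).arg| < E := by
    by_contra! hge
    have h1 := norm_ieval_sub_exp_le_errNorm hu ω hx
    rw [norm_ieval_sub_exp_of_phase hu_eq, add_sub_cancel_left] at h1
    have h2 := abs_sin_half_le_abs_sin_half (s := E) (by rwa [abs_of_nonneg hE₀])
      (Complex.abs_arg_le_pi (f x))
    linarith [le_abs_self (sin (E / 2))]
  have hf_cont : Continuous f := by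
    have := continuous_ieval_of_mem_unitaryClass hu
    fun_prop
  refine ⟨fun x ↦ (f x).arg, fun x hx ↦ ?_, hφE, hu_eq⟩
  have hslit : f x ∈ Complex.slitPlane := by
    rw [Complex.mem_slitPlane_iff_arg]
    refine ⟨fun hπ ↦ ?_, fun h0 ↦ by simpa [h0] using hf_norm x⟩
    have := hφE x hx
    rw [hπ, abs_of_pos pi_pos] at this
    linarith
  exact ((Complex.continuousAt_arg hslit).comp hf_cont.continuousAt).continuousWithinAt

/-- (Equioscillation implies optimality.) If `ω ∈ (0, (n+1)π)` and the phase
error of `r ∈ 𝒰_n` equioscillates between `2n+2` points in `[−1,1]`, then `r` minimizes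
the approximation error over `𝒰_n` and `‖r − exp(ω·)‖ < 2`. -/
theorem equioscillation_implies_optimal (n : ℕ) (ω : ℝ)
    (hω : 0 < ω) (hω' : ω < ((n : ℝ) + 1) * Real.pi)
    (r : RatFunc ℂ) (hr : r ∈ unitaryClass n)
    (g : ℝ → ℝ) (hg : IsPhaseFun n r g)
    (hE : EquiOsc ω g (2 * n + 2)) :
    (∀ u ∈ unitaryClass n, errNorm ω r ≤ errNorm ω u) ∧ errNorm ω r < 2 := by
  obtain ⟨m, θ, μ, ξ, hm, -, -, hgθ, hgr⟩ := hg
  obtain rfl : g = arctanPhase θ μ ξ := funext hgθ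
  obtain ⟨η, hη, hηI, halt⟩ := hE.exists_alternates
  set E := phaseErrSup ω (arctanPhase θ μ ξ)
  have hE₀ : 0 ≤ E := (abs_nonneg _).trans_eq (halt.1 0)
  have hEπ : E < π := halt.lt_pi hη.monotone hηI hm hω.le hω'
  have hrE : errNorm ω r ≤ 2 * sin (E / 2) := errNorm_le_of_phase hgr
    (fun x hx ↦ abs_sub_le_phaseErrSup (continuous_arctanPhase θ μ ξ) ω hx) hEπ.le
  refine ⟨fun u hu ↦ ?_, hrE.trans_lt (two_mul_sin_half_lt_two hEπ hE₀)⟩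
  by_contra! hlt
  obtain ⟨φ, hφ, hφE, hu_eq⟩ := exists_phase_of_errNorm_lt hu hE₀ hEπ.le (hlt.trans_le hrE)
  obtain ⟨x, hx, hxφ⟩ := halt.exists_strictMono_eq hη hηI
    (by have := continuous_arctanPhase θ μ ξ; fun_prop) hφ hφE
  have hru : r = u := eq_of_ieval_eq_of_mem_unitaryClass hr hu hx.injective fun i ↦ by
    rw [hgr, hu_eq, ← hxφ i, add_sub_cancel]
  exact hlt.ne (by rw [hru])
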